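/- arXiv:2401.09415 — 7 statements merged into one kernel-verified Lean document; each statement's English description precedes it below -/
import Mathlib

section
/- Fix β ∈ [0,1), M ∈ [0,1], a matrix A ∈ R^{m×n} with nonzero rows, b = Ax for some solution x, and a singular direction index l. Let x_k, y_k be the KGSM iterates with y_0 = 0, where at each step a row index i_k is sampled independently with probability ||a_{i_k}||²/||A||_F², and x_{k+1} = x_k + ((b_{i_k} - ⟨a_{i_k},x_k⟩)/||a_{i_k}||²) a_{i_k} + M y_k, y_{k+1} = β y_k + (1-β)(x_{k+1}-x_k). Then for all k ≥ 0, E⟨x_{k+1} - x, v_l⟩ = [r, ζ] · B^k · [1, -1/(1-β)]^T · ⟨x_0 - x, v_l⟩, where r = 1 - σ_l²/||A||_F² + M(1-β), ζ = M(1-β)², and B = [[r, ζ],[-1, β]]. -/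
open Matrix Finset

def kext {m : ℕ} (d : Fin m) (K : ℕ) (σ : Fin K → Fin m) : ℕ → Fin m :=
  fun t => if h : t < K then σ ⟨t, h⟩ else d

lemma kext_snoc_lt {m : ℕ} (d : Fin m) (k : ℕ) (σ : Fin k → Fin m) (j : Fin m)
    (t : ℕ) (h : t < k) : kext d (k+1) (Fin.snoc σ j) t = kext d k σ t := by
  have h1 : t < k + 1 := Nat.lt_succ_of_lt h
  have h2 : (⟨t, h1⟩ : Fin (k+1)) = Fin.castSucc ⟨t, h⟩ := rfl
  simp only [kext, dif_pos h1, dif_pos h, h2, Fin.snoc_castSucc]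

lemma kext_snoc_last {m : ℕ} (d : Fin m) (k : ℕ) (σ : Fin k → Fin m) (j : Fin m) :
    kext d (k+1) (Fin.snoc σ j) k = j := by
  have h1 : k < k + 1 := Nat.lt_succ_self k
  have h2 : (⟨k, h1⟩ : Fin (k+1)) = Fin.last k := rfl
  simp only [kext, dif_pos h1, h2, Fin.snoc_last]

def kSnocEquiv (m k : ℕ) : ((Fin k → Fin m) × Fin m) ≃ (Fin (k+1) → Fin m) where
  toFun p := Fin.snoc p.1 p.2
  invFun σ := (Fin.init σ, σ (Fin.last k))
  left_inv p := by simp [Fin.init_snoc, Fin.snoc_last]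
  right_inv σ := by simp [Fin.snoc_init_self]

lemma ksum_snoc {m : ℕ} (k : ℕ) (f : (Fin (k+1) → Fin m) → ℝ) :
    ∑ σ : Fin (k+1) → Fin m, f σ
      = ∑ σ : Fin k → Fin m, ∑ j : Fin m, f (Fin.snoc σ j) := by
  rw [← Equiv.sum_comp (kSnocEquiv m k) f, Fintype.sum_prod_type]
  rfl

lemma kprod_snoc {m : ℕ} (k : ℕ) (g : Fin m → ℝ) (σ : Fin k → Fin m) (j : Fin m) :
    ∏ t : Fin (k+1), g ((Fin.snoc σ j : Fin (k+1) → Fin m) t)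
      = (∏ t : Fin k, g (σ t)) * g j := by
  rw [Fin.prod_univ_castSucc]
  simp [Fin.snoc_castSucc, Fin.snoc_last]

noncomputable def kEx {m n : ℕ} (A : Matrix (Fin m) (Fin n) ℝ) (F : ℝ) (d : Fin m)
    (x : (ℕ → Fin m) → ℕ → (Fin n → ℝ)) (xs v : Fin n → ℝ) (K : ℕ) : ℝ :=
  ∑ σ : Fin K → Fin m, (∏ t, (A (σ t) ⬝ᵥ A (σ t)) / F) * ((x (kext d K σ) K - xs) ⬝ᵥ v)

noncomputable def kEy {m n : ℕ} (A : Matrix (Fin m) (Fin n) ℝ) (F : ℝ) (d : Fin m)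
    (y : (ℕ → Fin m) → ℕ → (Fin n → ℝ)) (v : Fin n → ℝ) (K : ℕ) : ℝ :=
  ∑ σ : Fin K → Fin m, (∏ t, (A (σ t) ⬝ᵥ A (σ t)) / F) * (y (kext d K σ) K ⬝ᵥ v)

/-- Main result: expected signed error of KGSM along a right
singular vector.  The expectation over the i.i.d. indices `i_0,…,i_k`
(`P(i = j) = ‖a_j‖²/‖A‖_F²`) is written as a weighted sum over all index
sequences `σ : Fin (k+1) → Fin m`. -/
theorem kgsm_expected_error {m n : ℕ} (A : Matrix (Fin m) (Fin n) ℝ)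
    (hrow : ∀ i, A i ⬝ᵥ A i ≠ 0)
    (F : ℝ) (hF : F = ∑ i, A i ⬝ᵥ A i)
    (xs x0 : Fin n → ℝ) (b : Fin m → ℝ) (hb : ∀ i, b i = A i ⬝ᵥ xs)
    (v : Fin n → ℝ) (σsq : ℝ) (hv : (Aᵀ * A).mulVec v = σsq • v)
    (β M : ℝ) (hβ : β ∈ Set.Ico (0:ℝ) 1) (hM : M ∈ Set.Icc (0:ℝ) 1)
    (x y : (ℕ → Fin m) → ℕ → (Fin n → ℝ))
    (hx0 : ∀ ω, x ω 0 = x0) (hy0 : ∀ ω, y ω 0 = 0)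
    (hx : ∀ ω k, x ω (k+1) = x ω k
      + ((b (ω k) - A (ω k) ⬝ᵥ x ω k) / (A (ω k) ⬝ᵥ A (ω k))) • A (ω k) + M • y ω k)
    (hy : ∀ ω k, y ω (k+1) = β • y ω k + (1-β) • (x ω (k+1) - x ω k))
    (r ζ : ℝ) (hr : r = 1 - σsq/F + M*(1-β)) (hζ : ζ = M*(1-β)^2)
    (d : Fin m) (k : ℕ) :
    ∑ σ : Fin (k+1) → Fin m,
        (∏ t, (A (σ t) ⬝ᵥ A (σ t)) / F) *
          ((x (fun t => if h : t < k+1 then σ ⟨t, h⟩ else d) (k+1) - xs) ⬝ᵥ v)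
      = (![r, ζ] ⬝ᵥ ((!![r, ζ; -1, β]) ^ k).mulVec ![1, -1/(1-β)])
          * ((x0 - xs) ⬝ᵥ v) := by
  obtain ⟨hβ0, hβ1⟩ := hβ
  have hFpos : 0 < F := by
    have h1 : ∀ i, 0 ≤ A i ⬝ᵥ A i := fun i => Finset.sum_nonneg fun j _ => mul_self_nonneg _
    have h2 : 0 < A d ⬝ᵥ A d := lt_of_le_of_ne (h1 d) (Ne.symm (hrow d))
    rw [hF]
    calc (0:ℝ) < A d ⬝ᵥ A d := h2
      _ ≤ ∑ i, A i ⬝ᵥ A i := Finset.single_le_sum (fun i _ => h1 i) (Finset.mem_univ d)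
  have hFne : F ≠ 0 := ne_of_gt hFpos
  have hwsum : ∑ j, (A j ⬝ᵥ A j) / F = 1 := by
    rw [← Finset.sum_div, ← hF, div_self hFne]
  have h1β : (1 : ℝ) - β ≠ 0 := by linarith
  -- spectral identity
  have key : ∀ e : Fin n → ℝ, ∑ j, (A j ⬝ᵥ e) * (A j ⬝ᵥ v) = σsq * (e ⬝ᵥ v) := by
    intro e
    have h2 : A.mulVec e ⬝ᵥ A.mulVec v = e ⬝ᵥ (Aᵀ * A).mulVec v := by
      rw [← Matrix.mulVec_mulVec, Matrix.dotProduct_mulVec e,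
        ← Matrix.vecMul_transpose]
    calc ∑ j, (A j ⬝ᵥ e) * (A j ⬝ᵥ v) = A.mulVec e ⬝ᵥ A.mulVec v := rfl
      _ = e ⬝ᵥ (Aᵀ * A).mulVec v := h2
      _ = σsq * (e ⬝ᵥ v) := by rw [hv, dotProduct_smul, smul_eq_mul]
  -- locality
  have loc : ∀ K (ω ω' : ℕ → Fin m), (∀ t, t < K → ω t = ω' t) →
      x ω K = x ω' K ∧ y ω K = y ω' K := by
    intro K
    induction K with
    | zero =>
        intro ω ω' _
        exact ⟨(hx0 ω).trans (hx0 ω').symm, (hy0 ω).trans (hy0 ω').symm⟩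
    | succ K ih =>
        intro ω ω' h
        obtain ⟨hxK, hyK⟩ := ih ω ω' (fun t ht => h t (ht.trans (Nat.lt_succ_self K)))
        have hK : ω K = ω' K := h K (Nat.lt_succ_self K)
        have hxS : x ω (K+1) = x ω' (K+1) := by rw [hx, hx, hxK, hyK, hK]
        exact ⟨hxS, by rw [hy, hy, hxK, hyK, hxS]⟩
  -- marginalization of the last sample
  have marg : ∀ (K : ℕ) (f : (ℕ → Fin m) → ℝ),
      (∀ ω ω', (∀ t, t < K → ω t = ω' t) → f ω = f ω') →
      ∑ σ : Fin (K+1) → Fin m, (∏ t, (A (σ t) ⬝ᵥ A (σ t)) / F) * f (kext d (K+1) σ)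
        = ∑ σ : Fin K → Fin m, (∏ t, (A (σ t) ⬝ᵥ A (σ t)) / F) * f (kext d K σ) := by
    intro K f hf
    rw [ksum_snoc]
    refine Finset.sum_congr rfl fun σ _ => ?_
    have hfj : ∀ j, f (kext d (K+1) (Fin.snoc σ j)) = f (kext d K σ) :=
      fun j => hf _ _ (fun t ht => kext_snoc_lt d K σ j t ht)
    calc ∑ j, (∏ t : Fin (K+1), (A ((Fin.snoc σ j : Fin (K+1) → Fin m) t) ⬝ᵥ A ((Fin.snoc σ j : Fin (K+1) → Fin m) t)) / F)
            * f (kext d (K+1) (Fin.snoc σ j))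
        = ∑ j, ((A j ⬝ᵥ A j) / F) *
            ((∏ t : Fin K, (A (σ t) ⬝ᵥ A (σ t)) / F) * f (kext d K σ)) := by
          refine Finset.sum_congr rfl fun j _ => ?_
          rw [kprod_snoc K (fun i => (A i ⬝ᵥ A i) / F) σ j, hfj j]
          ring
      _ = (∏ t : Fin K, (A (σ t) ⬝ᵥ A (σ t)) / F) * f (kext d K σ) := by
          rw [← Finset.sum_mul, hwsum, one_mul]
  -- step recursion for Ex
  have rec1 : ∀ K, kEx A F d x xs v (K+1) = (1 - σsq/F) * kEx A F d x xs v K + M * kEy A F d y v K := by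
    intro K
    unfold kEx kEy
    rw [ksum_snoc]
    have step : ∀ σ : Fin K → Fin m,
        ∑ j, (∏ t : Fin (K+1), (A ((Fin.snoc σ j : Fin (K+1) → Fin m) t) ⬝ᵥ A ((Fin.snoc σ j : Fin (K+1) → Fin m) t)) / F) *
          ((x (kext d (K+1) (Fin.snoc σ j)) (K+1) - xs) ⬝ᵥ v)
        = (∏ t : Fin K, (A (σ t) ⬝ᵥ A (σ t)) / F) *
            ((1 - σsq/F) * ((x (kext d K σ) K - xs) ⬝ᵥ v)
              + M * (y (kext d K σ) K ⬝ᵥ v)) := by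
      intro σ
      have hterm : ∀ j : Fin m,
          (∏ t : Fin (K+1), (A ((Fin.snoc σ j : Fin (K+1) → Fin m) t) ⬝ᵥ A ((Fin.snoc σ j : Fin (K+1) → Fin m) t)) / F) *
            ((x (kext d (K+1) (Fin.snoc σ j)) (K+1) - xs) ⬝ᵥ v)
          = (∏ t : Fin K, (A (σ t) ⬝ᵥ A (σ t)) / F) *
              ( ((A j ⬝ᵥ A j) / F) *
                  (((x (kext d K σ) K - xs) ⬝ᵥ v) + M * (y (kext d K σ) K ⬝ᵥ v))
                - ((A j ⬝ᵥ (x (kext d K σ) K - xs)) * (A j ⬝ᵥ v)) / F ) := by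
        intro j
        obtain ⟨hxeq, hyeq⟩ := loc K (kext d (K+1) (Fin.snoc σ j)) (kext d K σ)
          (fun t ht => kext_snoc_lt d K σ j t ht)
        have hωK : kext d (K+1) (Fin.snoc σ j) K = j := kext_snoc_last d K σ j
        have hx1 : x (kext d (K+1) (Fin.snoc σ j)) (K+1)
            = x (kext d K σ) K
              + ((b j - A j ⬝ᵥ x (kext d K σ) K) / (A j ⬝ᵥ A j)) • A j
              + M • y (kext d K σ) K := by
          rw [hx, hωK, hxeq, hyeq]
        rw [kprod_snoc K (fun i => (A i ⬝ᵥ A i) / F) σ j, hx1]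
        have hdot : (x (kext d K σ) K
              + ((b j - A j ⬝ᵥ x (kext d K σ) K) / (A j ⬝ᵥ A j)) • A j
              + M • y (kext d K σ) K - xs) ⬝ᵥ v
            = ((x (kext d K σ) K - xs) ⬝ᵥ v)
              + ((b j - A j ⬝ᵥ x (kext d K σ) K) / (A j ⬝ᵥ A j)) * (A j ⬝ᵥ v)
              + M * (y (kext d K σ) K ⬝ᵥ v) := by
          simp only [sub_dotProduct, add_dotProduct,
            smul_dotProduct, smul_eq_mul]
          ring
        rw [hdot]
        have hbj : b j - A j ⬝ᵥ x (kext d K σ) K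
            = -(A j ⬝ᵥ (x (kext d K σ) K - xs)) := by
          rw [hb, dotProduct_sub]
          ring
        rw [hbj]
        simp only [dotProduct_sub, sub_dotProduct]
        field_simp [hrow j]
        ring
      rw [Finset.sum_congr rfl (fun j _ => hterm j), ← Finset.mul_sum]
      congr 1
      rw [Finset.sum_sub_distrib, ← Finset.sum_mul, hwsum, one_mul, ← Finset.sum_div]
      have : ∑ j, (A j ⬝ᵥ (x (kext d K σ) K - xs)) * (A j ⬝ᵥ v)
          = σsq * ((x (kext d K σ) K - xs) ⬝ᵥ v) := key _
      rw [this]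
      ring
    rw [Finset.sum_congr rfl (fun σ _ => step σ), Finset.mul_sum, Finset.mul_sum,
      ← Finset.sum_add_distrib]
    exact Finset.sum_congr rfl fun σ _ => by ring
  -- step recursion for Ey
  have rec2 : ∀ K, kEy A F d y v (K+1) = β * kEy A F d y v K + (1-β) * (kEx A F d x xs v (K+1) - kEx A F d x xs v K) := by
    intro K
    have m1 := marg K (fun ω => y ω K ⬝ᵥ v) (fun ω ω' h => by show y ω K ⬝ᵥ v = y ω' K ⬝ᵥ v; rw [(loc K ω ω' h).2])
    have m2 := marg K (fun ω => (x ω K - xs) ⬝ᵥ v) (fun ω ω' h => by show (x ω K - xs) ⬝ᵥ v = (x ω' K - xs) ⬝ᵥ v; rw [(loc K ω ω' h).1])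
    have hsplit : ∀ σ : Fin (K+1) → Fin m,
        (y (kext d (K+1) σ) (K+1) ⬝ᵥ v)
          = β * (y (kext d (K+1) σ) K ⬝ᵥ v)
            + (1-β) * (((x (kext d (K+1) σ) (K+1) - xs) ⬝ᵥ v)
              - ((x (kext d (K+1) σ) K - xs) ⬝ᵥ v)) := by
      intro σ
      rw [hy]
      simp only [add_dotProduct, smul_dotProduct, sub_dotProduct,
        smul_eq_mul]
      ring
    unfold kEx kEy
    calc ∑ σ : Fin (K+1) → Fin m, (∏ t, (A (σ t) ⬝ᵥ A (σ t)) / F) *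
            (y (kext d (K+1) σ) (K+1) ⬝ᵥ v)
        = ∑ σ : Fin (K+1) → Fin m,
            (β * ((∏ t, (A (σ t) ⬝ᵥ A (σ t)) / F) * (y (kext d (K+1) σ) K ⬝ᵥ v))
              + (1-β) * ((∏ t, (A (σ t) ⬝ᵥ A (σ t)) / F) *
                  ((x (kext d (K+1) σ) (K+1) - xs) ⬝ᵥ v))
              - (1-β) * ((∏ t, (A (σ t) ⬝ᵥ A (σ t)) / F) *
                  ((x (kext d (K+1) σ) K - xs) ⬝ᵥ v))) := by
          refine Finset.sum_congr rfl fun σ _ => ?_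
          rw [hsplit σ]; ring
      _ = β * (∑ σ : Fin (K+1) → Fin m, (∏ t, (A (σ t) ⬝ᵥ A (σ t)) / F) *
              (y (kext d (K+1) σ) K ⬝ᵥ v))
            + (1-β) * (∑ σ : Fin (K+1) → Fin m, (∏ t, (A (σ t) ⬝ᵥ A (σ t)) / F) *
              ((x (kext d (K+1) σ) (K+1) - xs) ⬝ᵥ v))
            - (1-β) * (∑ σ : Fin (K+1) → Fin m, (∏ t, (A (σ t) ⬝ᵥ A (σ t)) / F) *
              ((x (kext d (K+1) σ) K - xs) ⬝ᵥ v)) := by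
          rw [Finset.sum_sub_distrib, Finset.sum_add_distrib, Finset.mul_sum,
            Finset.mul_sum, Finset.mul_sum]
      _ = β * kEy A F d y v K + (1-β) * (kEx A F d x xs v (K+1) - kEx A F d x xs v K) := by
          rw [m1, m2]
          unfold kEx kEy
          ring
  -- the 2x2 matrix recursion
  set B2 : Matrix (Fin 2) (Fin 2) ℝ := !![r, ζ; -1, β] with hB2
  set w0 : Fin 2 → ℝ := ![1, -1/(1-β)] with hw0
  have hmul : ∀ u : Fin 2 → ℝ, (B2.mulVec u) 0 = r * u 0 + ζ * u 1 ∧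
      (B2.mulVec u) 1 = -(u 0) + β * u 1 := by
    intro u
    constructor <;>
    · simp [hB2, Matrix.mulVec, dotProduct, Fin.sum_univ_two]
      try ring
  have hp : ∀ K, ((B2^(K+1)).mulVec w0) 0
      = r * ((B2^K).mulVec w0) 0 + ζ * ((B2^K).mulVec w0) 1 := by
    intro K
    rw [pow_succ', ← Matrix.mulVec_mulVec]
    exact (hmul _).1
  have hq : ∀ K, ((B2^(K+1)).mulVec w0) 1
      = -(((B2^K).mulVec w0) 0) + β * ((B2^K).mulVec w0) 1 := by
    intro K
    rw [pow_succ', ← Matrix.mulVec_mulVec]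
    exact (hmul _).2
  have hp0 : ((B2^0).mulVec w0) 0 = 1 := by
    simp [hw0, Matrix.one_mulVec]
  have hq0 : ((B2^0).mulVec w0) 1 = -1/(1-β) := by
    simp [hw0, Matrix.one_mulVec]
  -- base cases
  have hEx0 : kEx A F d x xs v 0 = (x0 - xs) ⬝ᵥ v := by
    unfold kEx
    simp [hx0]
  have hEy0 : kEy A F d y v 0 = 0 := by
    unfold kEy
    simp [hy0, zero_dotProduct]
  -- main induction
  have main : ∀ K, kEx A F d x xs v K = ((B2^K).mulVec w0) 0 * ((x0 - xs) ⬝ᵥ v)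
      ∧ kEy A F d y v K = ((1-β) * ((B2^K).mulVec w0) 0 + (1-β)^2 * ((B2^K).mulVec w0) 1)
          * ((x0 - xs) ⬝ᵥ v) := by
    intro K
    induction K with
    | zero =>
        rw [hEx0, hEy0, hp0, hq0]
        constructor
        · ring
        · have h0 : (1-β) * 1 + (1-β)^2 * (-1/(1-β)) = 0 := by
            field_simp
            ring
          rw [h0, zero_mul]
    | succ K ih =>
        obtain ⟨ihx, ihy⟩ := ih
        have hx' : kEx A F d x xs v (K+1) = ((B2^(K+1)).mulVec w0) 0 * ((x0 - xs) ⬝ᵥ v) := by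
          rw [rec1 K, ihx, ihy, hp K, hr, hζ]
          ring
        refine ⟨hx', ?_⟩
        rw [rec2 K, hx', ihx, ihy, hp K, hq K, hr, hζ]
        ring
  -- conclusion
  have hfinal : (![r, ζ] ⬝ᵥ ((B2) ^ k).mulVec w0)
      = r * ((B2^k).mulVec w0) 0 + ζ * ((B2^k).mulVec w0) 1 := by
    simp [dotProduct, Fin.sum_univ_two]
  have hgoal : kEx A F d x xs v (k+1)
      = (![r, ζ] ⬝ᵥ ((B2) ^ k).mulVec w0) * ((x0 - xs) ⬝ᵥ v) := by
    rw [rec1 k, (main k).1, (main k).2, hfinal, hr, hζ]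
    ring
  rw [hB2, hw0] at hgoal
  exact hgoal
end

section
/- With r = 1 - η + M(1-β) and ζ = M(1-β)², the discriminant D(β) = (r - β)² - 4ζ, viewed as a function of β, has exactly the two zeros β_0 = 1 - η/(1-√M)² and β_1 = 1 - η/(1+√M)², provided M ∈ (0,1) and η > 0. Moreover D(β) ≥ 0 for β ≤ β_0, D(β) < 0 for β_0 < β < β_1, and D(β) ≥ 0 for β ≥ β_1. -/
/-- zeros and sign of the discriminant `D(β)`. -/
theorem discriminant_zeros_and_sign (η M : ℝ) (hη : η ∈ Set.Ioc (0:ℝ) 1)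
    (hM : M ∈ Set.Ioo (0:ℝ) 1)
    (D : ℝ → ℝ) (hD : ∀ β, D β = ((1-β)*(1+M) - η)^2 - 4*M*(1-β)^2)
    (β₀ β₁ : ℝ) (hβ₀ : β₀ = 1 - η/(1-Real.sqrt M)^2)
    (hβ₁ : β₁ = 1 - η/(1+Real.sqrt M)^2) :
    (∀ β, D β = 0 ↔ β = β₀ ∨ β = β₁) ∧
    (∀ β, β ≤ β₀ → 0 ≤ D β) ∧
    (∀ β, β₀ < β → β < β₁ → D β < 0) ∧
    (∀ β, β₁ ≤ β → 0 ≤ D β) := by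
  obtain ⟨hη0, hη1⟩ := hη
  obtain ⟨hM0, hM1⟩ := hM
  set s := Real.sqrt M with hsdef
  have hs0 : 0 < s := Real.sqrt_pos.mpr hM0
  have hs1 : s < 1 := by
    rw [hsdef, show (1:ℝ) = Real.sqrt 1 by simp]
    exact Real.sqrt_lt_sqrt hM0.le hM1
  have hsq : s ^ 2 = M := Real.sq_sqrt hM0.le
  have hne0 : (1 - s) ≠ 0 := by nlinarith
  have hne1 : (1 + s) ≠ 0 := by nlinarith
  have hp0 : 0 < (1 - s) ^ 2 := by positivity
  have hp1 : 0 < (1 + s) ^ 2 := by positivity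
  have key : ∀ β, D β = ((1-s)^2 * (β₀ - β)) * ((1+s)^2 * (β₁ - β)) := by
    intro β
    have h0 : (1-s)^2 * (β₀ - β) = (1-s)^2 * (1-β) - η := by
      rw [hβ₀]; field_simp; ring
    have h1 : (1+s)^2 * (β₁ - β) = (1+s)^2 * (1-β) - η := by
      rw [hβ₁]; field_simp; ring
    rw [hD, h0, h1, ← hsq]; ring
  have hlt : β₀ < β₁ := by
    rw [hβ₀, hβ₁]
    have : η / (1+s)^2 < η / (1-s)^2 := by
      apply div_lt_div_of_pos_left hη0 hp0
      nlinarith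
    linarith
  refine ⟨fun β => ?_, fun β hβ => ?_, fun β h1 h2 => ?_, fun β hβ => ?_⟩
  · rw [key β]
    constructor
    · intro h
      rcases mul_eq_zero.mp h with h | h <;> rcases mul_eq_zero.mp h with h | h
      · exact absurd h (by positivity)
      · left; linarith
      · exact absurd h (by positivity)
      · right; linarith
    · rintro (rfl | rfl) <;> simp
  · rw [key β]
    exact mul_nonneg (mul_nonneg hp0.le (by linarith)) (mul_nonneg hp1.le (by linarith))
  · rw [key β]
    exact mul_neg_of_neg_of_pos (mul_neg_of_pos_of_neg hp0 (by linarith))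
      (mul_pos hp1 (by linarith))
  · rw [key β]
    have h := mul_nonneg (mul_nonneg hp0.le (show (0:ℝ) ≤ β - β₀ by linarith))
      (mul_nonneg hp1.le (show (0:ℝ) ≤ β - β₁ by linarith))
    nlinarith
end

section
/- Let η ∈ (0,1], M ∈ [0, (1-√η)²], and set β_0 = 1 - η/(1-√M)². Define λ_1(β) = (r+β+√D)/2 when D = (r-β)² - 4ζ ≥ 0 and |λ_1(β)|² = rβ + ζ when D < 0, where r = 1 - η + M(1-β), ζ = M(1-β)². Then β_0 minimizes |λ_1(β)| over β ∈ [0,1]. -/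
set_option maxHeartbeats 1000000 in
/-- `β₀ = 1 - η/(1-√M)²` minimizes the modulus of the top
eigenvalue `λ₁(β)` over `β ∈ [0,1]`. -/
theorem beta0_minimizes_top_eigenvalue (η M : ℝ) (hη : η ∈ Set.Ioc (0:ℝ) 1)
    (hM : M ∈ Set.Icc (0:ℝ) ((1 - Real.sqrt η)^2))
    (β₀ : ℝ) (hβ₀ : β₀ = 1 - η/(1-Real.sqrt M)^2)
    (f : ℝ → ℝ)
    (hf : ∀ β, f β =
      if 0 ≤ ((1-η+M*(1-β)) - β)^2 - 4*(M*(1-β)^2)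
      then |((1-η+M*(1-β)) + β +
        Real.sqrt (((1-η+M*(1-β)) - β)^2 - 4*(M*(1-β)^2)))/2|
      else Real.sqrt ((1-η+M*(1-β))*β + M*(1-β)^2)) :
    β₀ ∈ Set.Icc (0:ℝ) 1 ∧ ∀ β ∈ Set.Icc (0:ℝ) 1, f β₀ ≤ f β := by
  obtain ⟨hη0, hη1⟩ := hη
  obtain ⟨hM0, hM1⟩ := hM
  set s := Real.sqrt M with hs_def
  have hs0 : 0 ≤ s := Real.sqrt_nonneg M
  have hs2 : s^2 = M := Real.sq_sqrt hM0
  have hre1 : 0 ≤ 1 - Real.sqrt η := by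
    have := Real.sqrt_le_one.mpr hη1
    linarith
  have hse : s ≤ 1 - Real.sqrt η := by
    have h := Real.sqrt_le_sqrt hM1
    rwa [Real.sqrt_sq hre1] at h
  have hηsqrt : Real.sqrt η ≤ 1 - s := by linarith
  have hη_sq : η ≤ (1-s)^2 := by
    have h := Real.sq_sqrt hη0.le
    nlinarith [Real.sqrt_nonneg η]
  have hu0 : 0 < 1 - s := lt_of_lt_of_le (Real.sqrt_pos.mpr hη0) hηsqrt
  have hs1 : s ≤ 1 := by linarith
  have hu1 : 1 - s ≤ 1 := by linarith
  have hune : (1:ℝ) - s ≠ 0 := ne_of_gt hu0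
  have hβ₀' : β₀ = 1 - η/(1-s)^2 := hβ₀
  -- v := 1 - η/(1-s) is nonnegative
  have hηu : η ≤ 1 - s := by nlinarith
  have hv0 : 0 ≤ 1 - η/(1-s) := by
    rw [sub_nonneg, div_le_one hu0]; exact hηu
  constructor
  · constructor
    · rw [hβ₀']
      have h1 : η/(1-s)^2 ≤ 1 := by
        rw [div_le_one (by positivity)]; exact hη_sq
      linarith
    · rw [hβ₀']
      have : 0 ≤ η/(1-s)^2 := by positivity
      linarith
  · intro β hβ
    obtain ⟨hb0, hb1⟩ := hβ
    -- discriminant at β₀ is zero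
    have hD0 : ((1-η+M*(1-β₀)) - β₀)^2 - 4*(M*(1-β₀)^2) = 0 := by
      rw [hβ₀', ← hs2]; field_simp; ring
    have hfβ₀ : f β₀ = 1 - η/(1-s) := by
      rw [hf β₀, if_pos (le_of_eq hD0.symm), hD0, Real.sqrt_zero]
      have hval : ((1-η+M*(1-β₀)) + β₀ + 0)/2 = 1 - η/(1-s) := by
        rw [hβ₀', ← hs2]; field_simp; ring
      rw [hval, abs_of_nonneg hv0]
    rw [hfβ₀, hf β]
    have hw0 : 0 ≤ 1 - β := by linarith
    -- factored form of the discriminant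
    have hDfact : ((1-η+M*(1-β)) - β)^2 - 4*(M*(1-β)^2)
        = ((1-β)*(1-s)^2 - η)*((1-β)*(1+s)^2 - η) := by
      rw [← hs2]; ring
    split_ifs with hD
    · -- real eigenvalues case
      refine le_trans ?_ (le_abs_self _)
      by_cases hc : (1-β)*(1-s)^2 ≤ η
      · -- 2v ≤ T
        have hlin : (1-s)*((1-η+s^2*(1-β)) + β - 2*(1-η/(1-s)))
            = (1+s)*(η - (1-β)*(1-s)^2) := by
          field_simp; ring
        have h2v : 2*(1 - η/(1-s)) ≤ (1-η+M*(1-β)) + β := by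
          rw [← hs2]; nlinarith [hlin]
        have hsq := Real.sqrt_nonneg (((1-η+M*(1-β)) - β)^2 - 4*(M*(1-β)^2))
        linarith
      · push_neg at hc
        have hD2 : (2*(1-η/(1-s)) - ((1-η+M*(1-β)) + β))^2
            ≤ ((1-η+M*(1-β)) - β)^2 - 4*(M*(1-β)^2) := by
          rw [← hs2]
          have hid : (1-s)^2*((((1-η+s^2*(1-β)) - β)^2 - 4*(s^2*(1-β)^2))
              - (2*(1-η/(1-s)) - ((1-η+s^2*(1-β)) + β))^2)
              = 4*s*η*((1-β)*(1-s)^2 - η) := by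
            field_simp; ring
          have h3 : 0 ≤ 4*s*η*((1-β)*(1-s)^2 - η) := by
            have : 0 ≤ (1-β)*(1-s)^2 - η := by linarith
            positivity
          have h5 : 0 ≤ (1-s)^2*((((1-η+s^2*(1-β)) - β)^2 - 4*(s^2*(1-β)^2))
              - (2*(1-η/(1-s)) - ((1-η+s^2*(1-β)) + β))^2) := by
            rw [hid]; exact h3
          nlinarith [h5, sq_nonneg (1-s), mul_pos hu0 hu0]
        have h1 := Real.le_sqrt_of_sq_le hD2
        linarith
    · -- complex eigenvalues case
      push_neg at hD
      rw [hDfact] at hD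
      have hwu : (1-β)*(1-s)^2 < η := by
        by_contra h
        push_neg at h
        have hB : 0 ≤ (1-β)*(1+s)^2 - η := by nlinarith [mul_nonneg hw0 hs0]
        nlinarith [mul_nonneg (by linarith : (0:ℝ) ≤ (1-β)*(1-s)^2 - η) hB]
      have hmarg : 0 ≤ 1 - η - s^2 := by nlinarith
      have hdet : (1-η/(1-s))^2 ≤ (1-η+M*(1-β))*β + M*(1-β)^2 := by
        rw [← hs2]
        have hid2 : (1-s)^2*(((1-η+s^2*(1-β))*β + s^2*(1-β)^2) - (1-η/(1-s))^2)
            = (η - (1-β)*(1-s)^2)*(1-η-s^2) := by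
          field_simp; ring
        nlinarith [mul_pos hu0 hu0, mul_nonneg (by linarith : (0:ℝ) ≤ η - (1-β)*(1-s)^2) hmarg]
      exact Real.le_sqrt_of_sq_le hdet
end

section
/- For M ∈ [0, (1-√η)²] and β ∈ [0, β_0] with β_0 = 1 - η/(1-√M)², the derivative of λ_1(β) = (r + β + √D)/2 with respect to β is nonpositive, where r = 1 - η + M(1-β), D = (r-β)² - 4M(1-β)². In particular, (1-M)²·D - (∂_β D / 2)² = -4η²M ≤ 0. -/
/-!
Write `s = √M` and `A(β) = (1-β)(1-s)² - η`, so that `β < β₀ ↔ A(β) > 0`. Then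
`D = A · (A + 4s(1-β))` and `D'/2 = -((1+s)² A + 2ηs)`, so below `β₀` the discriminant is
positive and decreasing. Since `λ₁' = ((1-M) + (D'/2)/√D)/2`, nonpositivity amounts to
`(1-M)√D ≤ -D'/2`, which is the square root of `(1-M)² D - (D'/2)² = -4η²M ≤ 0`.
At the endpoint `β₀`, where `D` vanishes and `λ₁` may fail to be differentiable, we use
instead that the continuous function `λ₁` is antitone on `(-∞, β₀]`.
-/

open Set Real

theorem AntitoneOn.deriv_nonpos_of_uniqueDiffWithinAt {g : ℝ → ℝ} {s : Set ℝ} {x : ℝ}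
    (hg : AntitoneOn g s) (hs : UniqueDiffWithinAt ℝ s x) : deriv g x ≤ 0 := by
  by_cases hd : DifferentiableAt ℝ g x
  · exact hd.hasDerivAt.hasDerivWithinAt.nonpos_of_antitoneOn
      (uniqueDiffWithinAt_iff_accPt.mp hs) hg
  · rw [deriv_zero_of_not_differentiableAt hd]

theorem hasDerivAt_half_linear_add_sqrt {D : ℝ → ℝ} {d x : ℝ} (c k : ℝ)
    (hD : HasDerivAt D (2 * d) x) (hpos : 0 < D x) :
    HasDerivAt (fun y => (c + k * y + √(D y)) / 2) ((k + d / √(D x)) / 2) x := by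
  have h := ((((hasDerivAt_id' x).const_mul k).const_add c).add (hD.sqrt hpos.ne')).div_const 2
  rwa [mul_div_mul_left _ _ two_ne_zero, mul_one] at h

theorem add_div_sqrt_nonpos {k d D : ℝ} (hD : 0 < D) (hk : 0 ≤ k) (hd : d ≤ 0)
    (h : k ^ 2 * D ≤ d ^ 2) : k + d / √D ≤ 0 := by
  have hroot : k * √D ≤ -d :=
    calc k * √D = √(k ^ 2 * D) := by rw [sqrt_mul (sq_nonneg k), sqrt_sq hk]
      _ ≤ √(d ^ 2) := sqrt_le_sqrt h
      _ = -d := by rw [sqrt_sq_eq_abs, abs_of_nonpos hd]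
  have hquot : d / √D ≤ -k := (div_le_iff₀ (sqrt_pos.mpr hD)).mpr (by linarith)
  linarith

namespace Lambda1

/-- The discriminant `D = (r - β)² - 4M(1-β)²`, where `r = 1 - η + M(1-β)`. -/
def discr (η M β : ℝ) : ℝ := ((1 - β) * (1 + M) - η) ^ 2 - 4 * M * (1 - β) ^ 2

/-- `∂_β D / 2`. -/
def halfDeriv (η M β : ℝ) : ℝ := -(1 - β) * (1 - M) ^ 2 + η * (1 + M)

noncomputable def beta0 (η M : ℝ) : ℝ := 1 - η / (1 - √M) ^ 2

variable {η M β : ℝ}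

theorem hasDerivAt_discr : HasDerivAt (discr η M) (2 * halfDeriv η M β) β := by
  have hlin : HasDerivAt (fun b : ℝ => 1 - b) (-1) β := (hasDerivAt_id β).const_sub 1
  refine (((hlin.mul_const (1 + M)).sub_const η).pow 2 |>.sub
    ((hlin.pow 2).const_mul (4 * M))).congr_deriv ?_
  norm_num [halfDeriv]
  ring

@[fun_prop]
theorem continuous_discr : Continuous (discr η M) :=
  continuous_iff_continuousAt.2 fun _ => hasDerivAt_discr.continuousAt

theorem sq_mul_discr_sub_halfDeriv_sq :
    (1 - M) ^ 2 * discr η M β - halfDeriv η M β ^ 2 = -4 * η ^ 2 * M := by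
  simp only [discr, halfDeriv]
  ring

theorem lt_mul_of_lt_beta0 (hM : M < 1) (hβ : β < beta0 η M) :
    η < (1 - β) * (1 - √M) ^ 2 := by
  have hs : 0 < (1 - √M) ^ 2 := pow_pos (by linarith [(sqrt_lt' one_pos).mpr (by simpa)]) 2
  exact (div_lt_iff₀ hs).mp (by rw [beta0] at hβ; linarith)

theorem discr_sq (η s β : ℝ) :
    discr η (s ^ 2) β =
      ((1 - β) * (1 - s) ^ 2 - η) * ((1 - β) * (1 - s) ^ 2 - η + 4 * s * (1 - β)) := by
  simp only [discr]
  ring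

theorem halfDeriv_sq (η s β : ℝ) :
    halfDeriv η (s ^ 2) β = -((1 + s) ^ 2 * ((1 - β) * (1 - s) ^ 2 - η) + 2 * η * s) := by
  simp only [halfDeriv]
  ring

theorem discr_pos (hM0 : 0 ≤ M) (hM1 : M < 1) (hη : 0 < η) (hβ : β < beta0 η M) :
    0 < discr η M β := by
  have hA := lt_mul_of_lt_beta0 hM1 hβ
  have hβ1 : 0 < 1 - β := by nlinarith [sq_nonneg (1 - √M)]
  rw [← sq_sqrt hM0, discr_sq]
  exact mul_pos (by linarith) (by nlinarith [sqrt_nonneg M])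

theorem halfDeriv_nonpos (hM0 : 0 ≤ M) (hM1 : M < 1) (hη : 0 ≤ η)
    (hβ : β < beta0 η M) : halfDeriv η M β ≤ 0 := by
  have hA := lt_mul_of_lt_beta0 hM1 hβ
  rw [← sq_sqrt hM0, halfDeriv_sq, neg_nonpos]
  have := sqrt_nonneg M
  nlinarith [sq_nonneg (1 + √M), mul_nonneg hη this]

theorem one_sub_add_halfDeriv_div_sqrt_discr_nonpos (hM0 : 0 ≤ M) (hM1 : M < 1) (hη : 0 < η)
    (hβ : β < beta0 η M) : 1 - M + halfDeriv η M β / √(discr η M β) ≤ 0 := by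
  refine add_div_sqrt_nonpos (discr_pos hM0 hM1 hη hβ) (by linarith)
    (halfDeriv_nonpos hM0 hM1 hη.le hβ) ?_
  nlinarith [sq_mul_discr_sub_halfDeriv_sq (η := η) (M := M) (β := β), sq_nonneg η]

end Lambda1

open Lambda1 in
/-- on `[0,β₀]` the derivative of `λ₁(β) = (r+β+√D)/2` is
nonpositive; in particular the polynomial identity
`(1-M)²·D - (∂_β D/2)² = -4η²M` holds. -/
theorem lambda1_deriv_nonpos (η M : ℝ) (hη : η ∈ Set.Ioc (0:ℝ) 1)
    (hM : M ∈ Set.Icc (0:ℝ) ((1 - Real.sqrt η)^2))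
    (β₀ : ℝ) (hβ₀ : β₀ = 1 - η/(1-Real.sqrt M)^2)
    (D : ℝ → ℝ) (hD : ∀ β, D β = ((1-β)*(1+M) - η)^2 - 4*M*(1-β)^2)
    (f : ℝ → ℝ) (hf : ∀ β, f β = ((1-η+M*(1-β)) + β + Real.sqrt (D β))/2) :
    (∀ β ∈ Set.Icc 0 β₀, deriv f β ≤ 0) ∧
    (∀ β, (1-M)^2 * D β - (-(1-β)*(1-M)^2 + η*(1+M))^2 = -4*η^2*M) := by
  replace hβ₀ : β₀ = beta0 η M := hβ₀
  subst hβ₀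
  obtain ⟨hη0, hη1⟩ := hη
  obtain ⟨hM0, hMη⟩ := hM
  have hM1 : M < 1 := by
    have : 0 < √η := sqrt_pos.mpr hη0
    nlinarith [sqrt_le_one.mpr hη1]
  have hDeq : D = discr η M := funext hD
  have hfeq : f = fun β => (1 - η + M + (1 - M) * β + √(discr η M β)) / 2 := by
    funext β
    rw [hf, hDeq]
    ring
  refine ⟨fun β hβ => ?_, fun β => hDeq ▸ sq_mul_discr_sub_halfDeriv_sq⟩
  have hderiv : ∀ β < beta0 η M,
      HasDerivAt f ((1 - M + halfDeriv η M β / √(discr η M β)) / 2) β :=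
    fun β hβ => hfeq ▸ hasDerivAt_half_linear_add_sqrt _ _ hasDerivAt_discr
      (discr_pos hM0 hM1 hη0 hβ)
  have hanti : AntitoneOn f (Iic (beta0 η M)) := by
    refine antitoneOn_of_deriv_nonpos (convex_Iic _) (by rw [hfeq]; fun_prop) ?_ ?_ <;>
      rw [interior_Iic]
    · exact fun β hβ => (hderiv β hβ).differentiableAt.differentiableWithinAt
    · exact fun β hβ => (hderiv β hβ).deriv ▸ div_nonpos_of_nonpos_of_nonneg
        (one_sub_add_halfDeriv_div_sqrt_discr_nonpos hM0 hM1 hη0 hβ) zero_le_two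
  exact hanti.deriv_nonpos_of_uniqueDiffWithinAt (uniqueDiffOn_Iic _ β hβ.2)
end

section
/- Under the hypotheses of the KGSM expectation theorem, if additionally 0 ≤ M ≤ (1-√η_l)² and β = 1 - η_l/(1-√M)², then E⟨x_{k+1} - x, v_l⟩ = (1 - η_l/(1-√M))^k · (1 + η_l(√M(k+1) - 1)/(1-√M)) · ⟨x_0 - x, v_l⟩ for all k ≥ 0, where η_l = σ_l²/||A||_F². -/
/-!
Conditioning on the first `K` samples, one Kaczmarz step contracts the error component along the
singular vector `v` by `1 - η` in expectation, because the rows are drawn with probability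
proportional to `‖Aᵢ‖²` and `∑ᵢ (Aᵢ ⬝ z)(Aᵢ ⬝ v) = σ² (z ⬝ v)`. Hence the expected components of
the error and of the momentum evolve by a fixed `2 × 2` matrix. For `β = 1 - η/(1-√M)²` its trace
is `2λ` and its determinant `λ²` with `λ = 1 - η/(1-√M)`, so the error component solves the
double-root recurrence `aₖ₊₂ = 2λ aₖ₊₁ - λ² aₖ`, whose solutions are `λᵏ` times an affine
function of `k`.
-/

open Matrix Finset

namespace KGSM

section Paths

variable {α : Type*}

def extendPath (d : α) {K : ℕ} (σ : Fin K → α) : ℕ → α :=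
  fun t => if h : t < K then σ ⟨t, h⟩ else d

lemma extendPath_snoc (d : α) {K : ℕ} (σ : Fin K → α) (i : α) :
    extendPath d (Fin.snoc σ i : Fin (K + 1) → α) = Function.update (extendPath d σ) K i := by
  funext t
  rcases lt_trichotomy t K with ht | rfl | ht
  · simp [extendPath, ht, ht.trans K.lt_succ_self, ht.ne, Fin.snoc, Fin.castLT]
  · simp [extendPath, Fin.snoc]
  · simp [extendPath, ht.ne', not_lt_of_gt ht, not_le_of_gt ht]

variable [Fintype α]

/-- Expectation over the first `K` samples of an i.i.d. sequence with law `p`; later samples are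
frozen at `d`, so only functions depending on the first `K` samples are meaningful here. -/
def pathExpect (p : α → ℝ) (d : α) (K : ℕ) (f : (ℕ → α) → ℝ) : ℝ :=
  ∑ σ : Fin K → α, (∏ t, p (σ t)) * f (extendPath d σ)

variable (p : α → ℝ) (d : α)

lemma pathExpect_zero (f : (ℕ → α) → ℝ) : pathExpect p d 0 f = f (fun _ => d) := by
  simp only [pathExpect, univ_unique, sum_singleton, univ_eq_empty, prod_empty, one_mul]
  rfl

lemma pathExpect_succ (K : ℕ) (f : (ℕ → α) → ℝ) :
    pathExpect p d (K + 1) f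
      = pathExpect p d K (fun ω => ∑ i, p i * f (Function.update ω K i)) := by
  rw [pathExpect, ← (Fin.snocEquiv fun _ => α).sum_comp, Fintype.sum_prod_type, sum_comm]
  simp only [pathExpect, mul_sum]
  refine sum_congr rfl fun σ _ => sum_congr rfl fun i _ => ?_
  have hsnoc : (Fin.snocEquiv fun _ => α) (i, σ) = Fin.snoc σ i := rfl
  rw [hsnoc, extendPath_snoc, Fin.prod_univ_castSucc]
  simp only [Fin.snoc_castSucc, Fin.snoc_last]
  ring

lemma pathExpect_linear (K : ℕ) (a c : ℝ) (f g : (ℕ → α) → ℝ) :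
    pathExpect p d K (fun ω => a * f ω + c * g ω)
      = a * pathExpect p d K f + c * pathExpect p d K g := by
  simp only [pathExpect, mul_sum, ← sum_add_distrib]
  exact sum_congr rfl fun _ _ => by ring

end Paths

section Recurrence

variable {a c : ℕ → ℝ}

lemma add_two_eq_trace_sub_det_of_coupled {p r u w : ℝ}
    (ha : ∀ K, a (K + 1) = p * a K + r * c K) (hc : ∀ K, c (K + 1) = u * a K + w * c K) (K : ℕ) :
    a (K + 2) = (p + w) * a (K + 1) - (p * w - r * u) * a K := by
  linear_combination ha (K + 1) + r * hc K - w * ha K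

lemma eq_of_double_root_recurrence {l : ℝ}
    (h : ∀ K, a (K + 2) = 2 * l * a (K + 1) - l ^ 2 * a K) (K : ℕ) :
    a (K + 1) = l ^ K * ((K + 1) * a 1 - K * l * a 0) := by
  induction K using Nat.twoStepInduction with
  | zero => simp
  | one => rw [h 0]; push_cast; ring
  | more K ih ih' => rw [h (K + 1), ih', ih]; push_cast; ring

/-- With `η = (1 - β)(1 - s)²` and `M = s²` the coupled system has the double eigenvalue
`λ = 1 - (1 - β)(1 - s)`. -/
lemma coupled_error_closed_form {η M β s : ℝ} (hM : s ^ 2 = M) (hη : η = (1 - β) * (1 - s) ^ 2)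
    (ha : ∀ K, a (K + 1) = (1 - η) * a K + M * c K)
    (hc : ∀ K, c (K + 1) = -(1 - β) * η * a K + (β + (1 - β) * M) * c K) (hc0 : c 0 = 0)
    (k : ℕ) :
    a (k + 1)
      = (1 - (1 - β) * (1 - s)) ^ k * (1 + (1 - β) * (1 - s) * (s * (k + 1) - 1)) * a 0 := by
  have hdouble (K : ℕ) : a (K + 2) = 2 * (1 - (1 - β) * (1 - s)) * a (K + 1)
      - (1 - (1 - β) * (1 - s)) ^ 2 * a K := by
    rw [add_two_eq_trace_sub_det_of_coupled ha hc, ← hM, hη]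
    ring
  rw [eq_of_double_root_recurrence hdouble, ha 0, hc0, hη]
  ring

end Recurrence

section Kaczmarz

variable {ι κ : Type*} [Fintype ι] [Fintype κ] (A : Matrix ι κ ℝ) (b : ι → ℝ)

noncomputable def kaczmarzStep (i : ι) (w : κ → ℝ) : κ → ℝ :=
  w + ((b i - A i ⬝ᵥ w) / (A i ⬝ᵥ A i)) • A i

noncomputable def rowWeight (i : ι) : ℝ := A i ⬝ᵥ A i / ∑ j, A j ⬝ᵥ A j

variable {A b}

lemma sum_rowWeight [Nonempty ι] (hrow : ∀ i, A i ⬝ᵥ A i ≠ 0) : ∑ i, rowWeight A i = 1 := by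
  have hpos : 0 < ∑ j, A j ⬝ᵥ A j :=
    sum_pos (fun i _ => (dotProduct_self_star_nonneg (A i)).lt_of_ne' (hrow i)) univ_nonempty
  simp only [rowWeight, ← sum_div, div_self hpos.ne']

lemma sum_dotProduct_mul_dotProduct_of_mulVec_eq {v : κ → ℝ} {μ : ℝ} (hv : (Aᵀ * A) *ᵥ v = μ • v)
    (z : κ → ℝ) : ∑ i, (A i ⬝ᵥ z) * (A i ⬝ᵥ v) = μ * (z ⬝ᵥ v) := by
  change A *ᵥ z ⬝ᵥ A *ᵥ v = _
  rw [← vecMul_transpose, ← dotProduct_mulVec, mulVec_mulVec, hv, dotProduct_smul, smul_eq_mul]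

lemma eigenvalue_transpose_mul_self_mem_Icc {v : κ → ℝ} {μ : ℝ} (hv : (Aᵀ * A) *ᵥ v = μ • v)
    (hv0 : v ≠ 0) : μ ∈ Set.Icc 0 (∑ i, A i ⬝ᵥ A i) := by
  have hvv : 0 < v ⬝ᵥ v :=
    (dotProduct_self_star_nonneg v).lt_of_ne' (dotProduct_self_eq_zero.not.mpr hv0)
  have hRayleigh := sum_dotProduct_mul_dotProduct_of_mulVec_eq hv v
  have hCS (i : ι) : (A i ⬝ᵥ v) * (A i ⬝ᵥ v) ≤ (A i ⬝ᵥ A i) * (v ⬝ᵥ v) := by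
    simpa [dotProduct, sq] using sum_mul_sq_le_sq_mul_sq univ (A i) v
  constructor
  · have : 0 ≤ μ * (v ⬝ᵥ v) := hRayleigh ▸ sum_nonneg fun i _ => mul_self_nonneg _
    exact nonneg_of_mul_nonneg_left this hvv
  · refine le_of_mul_le_mul_right ?_ hvv
    rw [← hRayleigh, sum_mul]
    exact sum_le_sum fun i _ => hCS i

lemma sum_rowWeight_mul_kaczmarzStep_sub [Nonempty ι] (hrow : ∀ i, A i ⬝ᵥ A i ≠ 0)
    {xs v : κ → ℝ} {μ : ℝ} (hb : ∀ i, b i = A i ⬝ᵥ xs) (hv : (Aᵀ * A) *ᵥ v = μ • v)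
    (w : κ → ℝ) :
    ∑ i, rowWeight A i * ((kaczmarzStep A b i w - xs) ⬝ᵥ v)
      = (1 - μ / ∑ j, A j ⬝ᵥ A j) * ((w - xs) ⬝ᵥ v) := by
  have hterm (i : ι) : rowWeight A i * ((kaczmarzStep A b i w - xs) ⬝ᵥ v)
      = rowWeight A i * ((w - xs) ⬝ᵥ v)
        + (A i ⬝ᵥ (xs - w)) * (A i ⬝ᵥ v) / ∑ j, A j ⬝ᵥ A j := by
    have := hrow i
    simp only [rowWeight, kaczmarzStep, hb, sub_dotProduct, add_dotProduct, smul_dotProduct,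
      dotProduct_sub, smul_eq_mul]
    field_simp
    ring
  rw [sum_congr rfl fun i _ => hterm i, sum_add_distrib, ← sum_mul, sum_rowWeight hrow, ← sum_div,
    sum_dotProduct_mul_dotProduct_of_mulVec_eq hv, sub_dotProduct, sub_dotProduct]
  ring

end Kaczmarz

section Iteration

variable {ι κ : Type*} [Fintype κ]

structure IsKGSMIteration (A : Matrix ι κ ℝ) (b : ι → ℝ) (M β : ℝ)
    (x y : (ℕ → ι) → ℕ → κ → ℝ) : Prop where
  step_x : ∀ ω k, x ω (k + 1) = kaczmarzStep A b (ω k) (x ω k) + M • y ω k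
  step_y : ∀ ω k, y ω (k + 1) = β • y ω k + (1 - β) • (x ω (k + 1) - x ω k)

variable {A : Matrix ι κ ℝ} {b : ι → ℝ} {M β : ℝ} {x y : (ℕ → ι) → ℕ → κ → ℝ}

lemma IsKGSMIteration.congr (h : IsKGSMIteration A b M β x y) {x0 y0 : κ → ℝ}
    (hx0 : ∀ ω, x ω 0 = x0) (hy0 : ∀ ω, y ω 0 = y0) {K : ℕ} {ω ω' : ℕ → ι}
    (hωω' : ∀ t < K, ω t = ω' t) : x ω K = x ω' K ∧ y ω K = y ω' K := by
  induction K with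
  | zero => exact ⟨(hx0 ω).trans (hx0 ω').symm, (hy0 ω).trans (hy0 ω').symm⟩
  | succ K ih =>
    obtain ⟨hxK, hyK⟩ := ih fun t ht => hωω' t (ht.trans K.lt_succ_self)
    have hx : x ω (K + 1) = x ω' (K + 1) := by
      rw [h.step_x, h.step_x, hxK, hyK, hωω' K K.lt_succ_self]
    exact ⟨hx, by rw [h.step_y, h.step_y, hx, hxK, hyK]⟩

variable [Fintype ι] [Nonempty ι] {xs v x0 y0 : κ → ℝ} {μ : ℝ}

lemma IsKGSMIteration.sum_rowWeight_mul_error_succ (h : IsKGSMIteration A b M β x y)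
    (hx0 : ∀ ω, x ω 0 = x0) (hy0 : ∀ ω, y ω 0 = y0) (hrow : ∀ i, A i ⬝ᵥ A i ≠ 0)
    (hb : ∀ i, b i = A i ⬝ᵥ xs) (hv : (Aᵀ * A) *ᵥ v = μ • v) (ω : ℕ → ι) (K : ℕ) :
    ∑ i, rowWeight A i * ((x (Function.update ω K i) (K + 1) - xs) ⬝ᵥ v)
      = (1 - μ / ∑ j, A j ⬝ᵥ A j) * ((x ω K - xs) ⬝ᵥ v) + M * (y ω K ⬝ᵥ v) := by
  have hpast (i : ι) := h.congr hx0 hy0 (ω := Function.update ω K i) (ω' := ω) (K := K)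
    fun t ht => Function.update_of_ne ht.ne _ _
  simp only [h.step_x, Function.update_self, (hpast _).1, (hpast _).2, add_sub_right_comm,
    add_dotProduct, smul_dotProduct, smul_eq_mul, mul_add, sum_add_distrib, ← sum_mul,
    sum_rowWeight hrow, one_mul, sum_rowWeight_mul_kaczmarzStep_sub hrow hb hv]

lemma IsKGSMIteration.sum_rowWeight_mul_momentum_succ (h : IsKGSMIteration A b M β x y)
    (hx0 : ∀ ω, x ω 0 = x0) (hy0 : ∀ ω, y ω 0 = y0) (hrow : ∀ i, A i ⬝ᵥ A i ≠ 0)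
    (hb : ∀ i, b i = A i ⬝ᵥ xs) (hv : (Aᵀ * A) *ᵥ v = μ • v) (ω : ℕ → ι) (K : ℕ) :
    ∑ i, rowWeight A i * (y (Function.update ω K i) (K + 1) ⬝ᵥ v)
      = -(1 - β) * (μ / ∑ j, A j ⬝ᵥ A j) * ((x ω K - xs) ⬝ᵥ v)
        + (β + (1 - β) * M) * (y ω K ⬝ᵥ v) := by
  have hpast (i : ι) := h.congr hx0 hy0 (ω := Function.update ω K i) (ω' := ω) (K := K)
    fun t ht => Function.update_of_ne ht.ne _ _
  have hsplit (i : ι) : y (Function.update ω K i) (K + 1) ⬝ᵥ v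
      = β * (y ω K ⬝ᵥ v) - (1 - β) * ((x ω K - xs) ⬝ᵥ v)
        + (1 - β) * ((x (Function.update ω K i) (K + 1) - xs) ⬝ᵥ v) := by
    rw [h.step_y, (hpast i).1, (hpast i).2]
    simp only [add_dotProduct, smul_dotProduct, sub_dotProduct, smul_eq_mul]
    ring
  calc ∑ i, rowWeight A i * (y (Function.update ω K i) (K + 1) ⬝ᵥ v)
      = ∑ i, (rowWeight A i * (β * (y ω K ⬝ᵥ v) - (1 - β) * ((x ω K - xs) ⬝ᵥ v))
          + (1 - β) * (rowWeight A i * ((x (Function.update ω K i) (K + 1) - xs) ⬝ᵥ v))) :=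
        sum_congr rfl fun i _ => by rw [hsplit]; ring
    _ = β * (y ω K ⬝ᵥ v) - (1 - β) * ((x ω K - xs) ⬝ᵥ v)
          + (1 - β) * ((1 - μ / ∑ j, A j ⬝ᵥ A j) * ((x ω K - xs) ⬝ᵥ v) + M * (y ω K ⬝ᵥ v)) := by
        rw [sum_add_distrib, ← sum_mul, ← mul_sum, sum_rowWeight hrow, one_mul,
          h.sum_rowWeight_mul_error_succ hx0 hy0 hrow hb hv]
    _ = _ := by ring

lemma IsKGSMIteration.pathExpect_error_succ (h : IsKGSMIteration A b M β x y)
    (hx0 : ∀ ω, x ω 0 = x0) (hy0 : ∀ ω, y ω 0 = y0) (hrow : ∀ i, A i ⬝ᵥ A i ≠ 0)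
    (hb : ∀ i, b i = A i ⬝ᵥ xs) (hv : (Aᵀ * A) *ᵥ v = μ • v) (d : ι) (K : ℕ) :
    pathExpect (rowWeight A) d (K + 1) (fun ω => (x ω (K + 1) - xs) ⬝ᵥ v)
      = (1 - μ / ∑ j, A j ⬝ᵥ A j) * pathExpect (rowWeight A) d K (fun ω => (x ω K - xs) ⬝ᵥ v)
        + M * pathExpect (rowWeight A) d K (fun ω => y ω K ⬝ᵥ v) := by
  simp only [pathExpect_succ, h.sum_rowWeight_mul_error_succ hx0 hy0 hrow hb hv]
  exact pathExpect_linear ..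

lemma IsKGSMIteration.pathExpect_momentum_succ (h : IsKGSMIteration A b M β x y)
    (hx0 : ∀ ω, x ω 0 = x0) (hy0 : ∀ ω, y ω 0 = y0) (hrow : ∀ i, A i ⬝ᵥ A i ≠ 0)
    (hb : ∀ i, b i = A i ⬝ᵥ xs) (hv : (Aᵀ * A) *ᵥ v = μ • v) (d : ι) (K : ℕ) :
    pathExpect (rowWeight A) d (K + 1) (fun ω => y ω (K + 1) ⬝ᵥ v)
      = -(1 - β) * (μ / ∑ j, A j ⬝ᵥ A j)
          * pathExpect (rowWeight A) d K (fun ω => (x ω K - xs) ⬝ᵥ v)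
        + (β + (1 - β) * M) * pathExpect (rowWeight A) d K (fun ω => y ω K ⬝ᵥ v) := by
  simp only [pathExpect_succ, h.sum_rowWeight_mul_momentum_succ hx0 hy0 hrow hb hv]
  exact pathExpect_linear ..

end Iteration

lemma eq_zero_of_one_le_one_sub_sqrt_sq {η : ℝ} (h0 : 0 ≤ η) (h1 : η ≤ 1)
    (h : 1 ≤ (1 - √η) ^ 2) : η = 0 := by
  have hs0 : 0 ≤ √η := Real.sqrt_nonneg η
  have hs1 : √η ≤ 1 := Real.sqrt_le_one.mpr h1
  have : √η = 0 := by nlinarith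
  exact le_antisymm (Real.sqrt_eq_zero'.mp this) h0

lemma eq_mul_sq_of_eq_one_sub_div_sq {η β s : ℝ} (hβ : β = 1 - η / (1 - s) ^ 2)
    (hdeg : s = 1 → η = 0) : η = (1 - β) * (1 - s) ^ 2 ∧ η / (1 - s) = (1 - β) * (1 - s) := by
  rcases eq_or_ne s 1 with rfl | hs
  · simp [hdeg rfl]
  · have : 1 - s ≠ 0 := sub_ne_zero.mpr hs.symm
    subst hβ
    constructor <;> field_simp <;> ring

end KGSM

open KGSM

/-- KGSM expected error along a singular vector with the
optimized smoothing parameter `β = 1 - η/(1-√M)²`. -/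
theorem kgsm_expected_error_optimal_beta {m n : ℕ} (A : Matrix (Fin m) (Fin n) ℝ)
    (hrow : ∀ i, A i ⬝ᵥ A i ≠ 0)
    (F : ℝ) (hF : F = ∑ i, A i ⬝ᵥ A i)
    (xs x0 : Fin n → ℝ) (b : Fin m → ℝ) (hb : ∀ i, b i = A i ⬝ᵥ xs)
    (v : Fin n → ℝ) (σsq : ℝ) (hv : (Aᵀ * A).mulVec v = σsq • v)
    (η : ℝ) (hη : η = σsq / F)
    (β M : ℝ) (hM : M ∈ Set.Icc (0:ℝ) ((1 - Real.sqrt η)^2))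
    (hβ : β = 1 - η/(1-Real.sqrt M)^2)
    (x y : (ℕ → Fin m) → ℕ → (Fin n → ℝ))
    (hx0 : ∀ ω, x ω 0 = x0) (hy0 : ∀ ω, y ω 0 = 0)
    (hx : ∀ ω k, x ω (k+1) = x ω k
      + ((b (ω k) - A (ω k) ⬝ᵥ x ω k) / (A (ω k) ⬝ᵥ A (ω k))) • A (ω k) + M • y ω k)
    (hy : ∀ ω k, y ω (k+1) = β • y ω k + (1-β) • (x ω (k+1) - x ω k))
    (d : Fin m) (k : ℕ) :
    ∑ σ : Fin (k+1) → Fin m,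
        (∏ t, (A (σ t) ⬝ᵥ A (σ t)) / F) *
          ((x (fun t => if h : t < k+1 then σ ⟨t, h⟩ else d) (k+1) - xs) ⬝ᵥ v)
      = (1 - η/(1-Real.sqrt M))^k
          * (1 + η*(Real.sqrt M * (k+1) - 1)/(1-Real.sqrt M))
          * ((x0 - xs) ⬝ᵥ v) := by
  rcases eq_or_ne v 0 with rfl | hv0
  · simp
  subst hF
  change pathExpect (rowWeight A) d (k + 1) (fun ω => (x ω (k + 1) - xs) ⬝ᵥ v) = _
  have : Nonempty (Fin m) := ⟨d⟩
  have hkgsm : IsKGSMIteration A b M β x y := ⟨hx, hy⟩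
  obtain ⟨hσ0, hσF⟩ := eigenvalue_transpose_mul_self_mem_Icc hv hv0
  have hη0 : 0 ≤ η := hη ▸ div_nonneg hσ0 (hσ0.trans hσF)
  have hη1 : η ≤ 1 := hη ▸ div_le_one_of_le₀ hσF (hσ0.trans hσF)
  -- at `√M = 1` the divisions by `1 - √M` are junk; the constraint on `M` rules out `η ≠ 0` there
  have hdeg (hs : √M = 1) : η = 0 :=
    eq_zero_of_one_le_one_sub_sqrt_sq hη0 hη1 (Real.sqrt_eq_one.mp hs ▸ hM.2)
  obtain ⟨hηβ, hrate⟩ := eq_mul_sq_of_eq_one_sub_div_sq hβ hdeg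
  have key := coupled_error_closed_form (Real.sq_sqrt hM.1) hηβ
    (a := fun K => pathExpect (rowWeight A) d K fun ω => (x ω K - xs) ⬝ᵥ v)
    (c := fun K => pathExpect (rowWeight A) d K fun ω => y ω K ⬝ᵥ v)
    (fun K => hη ▸ hkgsm.pathExpect_error_succ hx0 hy0 hrow hb hv d K)
    (fun K => hη ▸ hkgsm.pathExpect_momentum_succ hx0 hy0 hrow hb hv d K)
    (by simp only [pathExpect_zero, hy0, zero_dotProduct]) k
  rw [mul_div_right_comm, hrate]
  simpa only [pathExpect_zero, hx0] using key
end

section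
/- For the standard randomized Kaczmarz iteration x_{k+1} = x_k + ((b_{i_k} - ⟨a_{i_k},x_k⟩)/||a_{i_k}||²)a_{i_k} on a consistent system Ax = b with rows sampled with probability ||a_i||²/||A||_F², one has E⟨x_k - x, v_l⟩ = (1 - σ_l²/||A||_F²)^k ⟨x_0 - x, v_l⟩ for every right singular vector v_l and all k ≥ 0. -/
/-!
A Kaczmarz step projects the current iterate onto the hyperplane of the sampled row, so the error
`e = x_k - x` becomes `e - (⟨a_i, e⟩ / ‖a_i‖²) a_i`. Averaging its component along `v` with the
weights `‖a_i‖² / ‖A‖_F²` cancels the `‖a_i‖²` and leaves `⟨e, v⟩ - ⟨e, AᵀA v⟩ / ‖A‖_F²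
= (1 - σ² / ‖A‖_F²) ⟨e, v⟩`. So `e ↦ ⟨e, v⟩` is an eigenfunction of the averaged step, and since
the iterate after `k` steps depends only on the first `k` sampled rows, the expectation over
these rows contracts by this factor at every step.
-/

open Matrix Finset

section RandomIteration

variable {α β R : Type*}

/-- The expectation over the i.i.d. indices `i_0, …, i_{k-1}` is a weighted sum over the samples
`σ : Fin k → α`; the padding `d` is never read by the first `k` steps. -/
def padPath (d : α) {k : ℕ} (σ : Fin k → α) : ℕ → α :=
  fun t => if h : t < k then σ ⟨t, h⟩ else d

lemma padPath_snoc_of_lt (d : α) {k : ℕ} (σ : Fin k → α) (j : α) {t : ℕ} (ht : t < k) :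
    padPath d (Fin.snoc σ j : Fin (k + 1) → α) t = padPath d σ t := by
  simp only [padPath, dif_pos ht, dif_pos (ht.trans k.lt_succ_self)]
  exact Fin.snoc_castSucc (α := fun _ => α) (i := ⟨t, ht⟩) ..

lemma padPath_snoc_self (d : α) {k : ℕ} (σ : Fin k → α) (j : α) :
    padPath d (Fin.snoc σ j : Fin (k + 1) → α) k = j := by
  simp only [padPath, dif_pos k.lt_succ_self]
  exact Fin.snoc_last (α := fun _ => α) ..

variable {step : α → β → β} {x : (ℕ → α) → ℕ → β} {x0 : β}

lemma iterate_congr (hx0 : ∀ ω, x ω 0 = x0) (hx : ∀ ω k, x ω (k + 1) = step (ω k) (x ω k))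
    {k : ℕ} {ω ω' : ℕ → α} (h : ∀ t < k, ω t = ω' t) : x ω k = x ω' k := by
  induction k with
  | zero => rw [hx0, hx0]
  | succ k ih =>
    rw [hx, hx, ih fun t ht => h t (ht.trans k.lt_succ_self), h k k.lt_succ_self]

theorem sum_prod_mul_iterate_eq_pow_mul [Fintype α] [CommSemiring R] (hx0 : ∀ ω, x ω 0 = x0)
    (hx : ∀ ω k, x ω (k + 1) = step (ω k) (x ω k)) (p : α → R) (f : β → R) (c : R)
    (hf : ∀ y, ∑ j, p j * f (step j y) = c * f y) (d : α) (k : ℕ) :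
    ∑ σ : Fin k → α, (∏ t, p (σ t)) * f (x (padPath d σ) k) = c ^ k * f x0 := by
  induction k with
  | zero => simp [hx0]
  | succ k ih =>
    have hsnoc : ∀ (j : α) (σ : Fin k → α),
        x (padPath d (Fin.snoc σ j : Fin (k + 1) → α)) (k + 1) = step j (x (padPath d σ) k) := by
      intro j σ
      rw [hx, padPath_snoc_self, iterate_congr hx0 hx fun t ht => padPath_snoc_of_lt d σ j ht]
    calc ∑ σ : Fin (k + 1) → α, (∏ t, p (σ t)) * f (x (padPath d σ) (k + 1))
        = ∑ σ : Fin k → α, ∑ j, (∏ t, p (σ t)) * p j * f (step j (x (padPath d σ) k)) := by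
          rw [← (Fin.snocEquiv fun _ => α).sum_comp, Fintype.sum_prod_type, Finset.sum_comm]
          simp only [Fin.snocEquiv, Equiv.coe_fn_mk, Fin.prod_univ_castSucc, Fin.snoc_castSucc,
            Fin.snoc_last, hsnoc]
      _ = ∑ σ : Fin k → α, (∏ t, p (σ t)) * (c * f (x (padPath d σ) k)) := by
          simp only [mul_assoc, ← Finset.mul_sum, hf]
      _ = c * ∑ σ : Fin k → α, (∏ t, p (σ t)) * f (x (padPath d σ) k) := by
          rw [Finset.mul_sum]
          exact Finset.sum_congr rfl fun σ _ => mul_left_comm ..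
      _ = c ^ (k + 1) * f x0 := by rw [ih, pow_succ', mul_assoc]

end RandomIteration

section Kaczmarz

variable {ι κ R : Type*} [Fintype ι] [Fintype κ]

lemma sum_dotProduct_mul_dotProduct [CommSemiring R] (A : Matrix ι κ R) (e v : κ → R) :
    ∑ i, (A i ⬝ᵥ e) * (A i ⬝ᵥ v) = e ⬝ᵥ (Aᵀ * A) *ᵥ v := by
  rw [← mulVec_mulVec, dotProduct_mulVec, vecMul_transpose]
  simp only [dotProduct, mulVec]

variable [Field R]

lemma dotProduct_kaczmarz_step_sub (a xs y v : κ → R) :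
    (y + ((a ⬝ᵥ xs - a ⬝ᵥ y) / (a ⬝ᵥ a)) • a - xs) ⬝ᵥ v
      = (y - xs) ⬝ᵥ v - (a ⬝ᵥ (y - xs)) * (a ⬝ᵥ v) / (a ⬝ᵥ a) := by
  rw [add_sub_right_comm, add_dotProduct, smul_dotProduct, smul_eq_mul, dotProduct_sub]
  ring

theorem sum_weighted_dotProduct_kaczmarz_step (A : Matrix ι κ R) (hrow : ∀ i, A i ⬝ᵥ A i ≠ 0)
    {F : R} (hF : F = ∑ i, A i ⬝ᵥ A i) (hF0 : F ≠ 0) {v : κ → R} {σsq : R}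
    (hv : (Aᵀ * A) *ᵥ v = σsq • v) (xs y : κ → R) :
    ∑ i, (A i ⬝ᵥ A i) / F * ((y + ((A i ⬝ᵥ xs - A i ⬝ᵥ y) / (A i ⬝ᵥ A i)) • A i - xs) ⬝ᵥ v)
      = (1 - σsq / F) * ((y - xs) ⬝ᵥ v) := by
  have hterm : ∀ i, (A i ⬝ᵥ A i) / F * ((y - xs) ⬝ᵥ v
      - (A i ⬝ᵥ (y - xs)) * (A i ⬝ᵥ v) / (A i ⬝ᵥ A i))
        = (A i ⬝ᵥ A i) * ((y - xs) ⬝ᵥ v) / F - (A i ⬝ᵥ (y - xs)) * (A i ⬝ᵥ v) / F := by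
    intro i
    field_simp [hrow i]
  simp only [dotProduct_kaczmarz_step_sub, hterm, Finset.sum_sub_distrib, ← Finset.sum_div,
    ← Finset.sum_mul, ← hF, sum_dotProduct_mul_dotProduct, hv, dotProduct_smul, smul_eq_mul]
  field_simp

end Kaczmarz

/-- expected signed error of the standard randomized Kaczmarz
iteration along a right singular vector (Steinerberger's theorem). -/
theorem kaczmarz_expected_error {m n : ℕ} (A : Matrix (Fin m) (Fin n) ℝ)
    (hrow : ∀ i, A i ⬝ᵥ A i ≠ 0)
    (F : ℝ) (hF : F = ∑ i, A i ⬝ᵥ A i)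
    (xs x0 : Fin n → ℝ) (b : Fin m → ℝ) (hb : ∀ i, b i = A i ⬝ᵥ xs)
    (v : Fin n → ℝ) (σsq : ℝ) (hv : (Aᵀ * A).mulVec v = σsq • v)
    (x : (ℕ → Fin m) → ℕ → (Fin n → ℝ))
    (hx0 : ∀ ω, x ω 0 = x0)
    (hx : ∀ ω k, x ω (k+1) = x ω k
      + ((b (ω k) - A (ω k) ⬝ᵥ x ω k) / (A (ω k) ⬝ᵥ A (ω k))) • A (ω k))
    (d : Fin m) (k : ℕ) :
    ∑ σ : Fin k → Fin m,
        (∏ t, (A (σ t) ⬝ᵥ A (σ t)) / F) *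
          ((x (fun t => if h : t < k then σ ⟨t, h⟩ else d) k - xs) ⬝ᵥ v)
      = (1 - σsq/F)^k * ((x0 - xs) ⬝ᵥ v) := by
  have hF0 : F ≠ 0 := by
    rw [hF]
    refine (Finset.sum_pos (fun i _ => ?_) ⟨d, Finset.mem_univ d⟩).ne'
    exact (dotProduct_star_self_nonneg (A i)).lt_of_ne' (hrow i)
  refine sum_prod_mul_iterate_eq_pow_mul
    (step := fun i y => y + ((b i - A i ⬝ᵥ y) / (A i ⬝ᵥ A i)) • A i) hx0 hx
    (fun i => A i ⬝ᵥ A i / F) (fun y => (y - xs) ⬝ᵥ v) _ (fun y => ?_) d k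
  simp only [hb]
  exact sum_weighted_dotProduct_kaczmarz_step A hrow hF hF0 hv xs y
end

section
/- Under the hypotheses of the KGSM theorem, the one-step conditional expectation satisfies E_{i_0,...,i_{k-1}}⟨x_{k+1}, v_l⟩ = r⟨x_k, v_l⟩ - ζ S_{k-1}, where r = 1 - σ_l²/||A||_F² + M(1-β), ζ = M(1-β)², and S_n = ∑_{j=1}^{n} β^{n-j}⟨x_j, v_l⟩ + (β^n/(1-β))⟨x_0, v_l⟩ (assuming the solution x = 0). -/
open Matrix Finset

/-!
Averaging the Kaczmarz projection over rows drawn with probability `‖aᵢ‖² / ‖A‖_F²` subtracts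
`(A xₖ)·(A v) / ‖A‖_F² = σ² ⟨xₖ, v⟩ / ‖A‖_F²` from `⟨xₖ + M yₖ, v⟩`, because `v` is an eigenvector
of `AᵀA`. The momentum recursion `y_{j+1} = β y_j + (1-β)(x_{j+1} - x_j)`, started at `y₀ = 0`,
unrolls to `⟨y_{j+1}, v⟩ = (1-β)(⟨x_{j+1}, v⟩ - (1-β) S_j)`, where `S` satisfies
`S_{j+1} = ⟨x_{j+1}, v⟩ + β S_j` and `S₀ = ⟨x₀, v⟩ / (1-β)`.
-/

section Spectral

variable {ι κ R : Type*} [Fintype ι] [Fintype κ] [CommRing R]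

theorem mulVec_dotProduct_mulVec_of_gram_mulVec_eq_smul {A : Matrix ι κ R} {v : κ → R} {σ : R}
    (hv : (Aᵀ * A) *ᵥ v = σ • v) (u : κ → R) : (A *ᵥ u) ⬝ᵥ (A *ᵥ v) = σ * (u ⬝ᵥ v) := by
  rw [← smul_eq_mul, ← dotProduct_smul, ← hv, ← mulVec_mulVec, dotProduct_mulVec u Aᵀ,
    vecMul_transpose]

end Spectral

section Kaczmarz

variable {ι κ : Type*} [Fintype ι] [Fintype κ]

theorem sum_rowProb_mul_kaczmarz_step_dotProduct (A : Matrix ι κ ℝ)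
    (hrow : ∀ i, A i ⬝ᵥ A i ≠ 0) (hA : ∑ i, A i ⬝ᵥ A i ≠ 0) (b : ι → ℝ) (u w v : κ → ℝ) :
    ∑ i, (A i ⬝ᵥ A i / ∑ i, A i ⬝ᵥ A i) *
        ((u + ((b i - A i ⬝ᵥ u) / (A i ⬝ᵥ A i)) • A i + w) ⬝ᵥ v)
      = (u + w) ⬝ᵥ v + (b ⬝ᵥ A *ᵥ v - (A *ᵥ u) ⬝ᵥ (A *ᵥ v)) / ∑ i, A i ⬝ᵥ A i := by
  set F := ∑ i, A i ⬝ᵥ A i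
  have hterm : ∀ i, (A i ⬝ᵥ A i / F) *
        ((u + ((b i - A i ⬝ᵥ u) / (A i ⬝ᵥ A i)) • A i + w) ⬝ᵥ v)
      = A i ⬝ᵥ A i / F * ((u + w) ⬝ᵥ v) + (b i * (A i ⬝ᵥ v) - (A i ⬝ᵥ u) * (A i ⬝ᵥ v)) / F := by
    intro i
    simp only [add_dotProduct, smul_dotProduct, smul_eq_mul]
    field_simp [hrow i]
    ring
  rw [Finset.sum_congr rfl fun i _ => hterm i, Finset.sum_add_distrib, ← Finset.sum_mul,
    ← Finset.sum_div, div_self hA, one_mul, ← Finset.sum_div, Finset.sum_sub_distrib]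
  rfl

end Kaczmarz

section Momentum

/-- The paper's `S_j`, for `aᵢ = ⟨xᵢ, v⟩`. -/
noncomputable def momentumSum (β : ℝ) (a : ℕ → ℝ) (j : ℕ) : ℝ :=
  (∑ i ∈ Icc 1 j, β ^ (j - i) * a i) + β ^ j / (1 - β) * a 0

variable {β : ℝ} {a : ℕ → ℝ}

theorem momentumSum_zero : momentumSum β a 0 = a 0 / (1 - β) := by
  rw [momentumSum, Finset.Icc_eq_empty_of_lt zero_lt_one, Finset.sum_empty, pow_zero, zero_add,
    one_div_mul_eq_div]

theorem momentumSum_succ (j : ℕ) :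
    momentumSum β a (j + 1) = a (j + 1) + β * momentumSum β a j := by
  have hpow : ∀ i ∈ Icc 1 j, β ^ (j + 1 - i) * a i = β * (β ^ (j - i) * a i) := by
    intro i hi
    rw [Finset.mem_Icc] at hi
    rw [show j + 1 - i = j - i + 1 by omega, pow_succ]
    ring
  rw [momentumSum, momentumSum, Finset.sum_Icc_succ_top (Nat.le_add_left 1 j),
    Finset.sum_congr rfl hpow, ← Finset.mul_sum, Nat.sub_self, pow_zero, pow_succ]
  ring

theorem momentum_eq_of_recurrence (hβ : β ≠ 1) {p : ℕ → ℝ} (hp0 : p 0 = 0)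
    (hp : ∀ j, p (j + 1) = β * p j + (1 - β) * (a (j + 1) - a j)) (j : ℕ) :
    p (j + 1) = (1 - β) * (a (j + 1) - (1 - β) * momentumSum β a j) := by
  have hβ' : 1 - β ≠ 0 := sub_ne_zero.mpr hβ.symm
  induction j with
  | zero =>
    rw [hp, hp0, momentumSum_zero]
    field_simp
    ring
  | succ j ih =>
    rw [hp, ih, momentumSum_succ]
    ring

end Momentum

theorem kgsm_one_step_conditional_expectation_general {m n : ℕ}
    (A : Matrix (Fin m) (Fin n) ℝ)
    (hrow : ∀ i, A i ⬝ᵥ A i ≠ 0)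
    (F : ℝ) (hF : F = ∑ i, A i ⬝ᵥ A i)
    (v : Fin n → ℝ) (σsq : ℝ) (hv : (Aᵀ * A).mulVec v = σsq • v)
    (β M : ℝ) (hβ : β ∈ Set.Ico (0:ℝ) 1)
    (ω : ℕ → Fin m) (x y : ℕ → Fin n → ℝ) (hy0 : y 0 = 0)
    (hy : ∀ j, y (j+1) = β • y j + (1-β) • (x (j+1) - x j))
    (r ζ : ℝ) (hr : r = 1 - σsq/F + M*(1-β)) (hζ : ζ = M*(1-β)^2)
    (S : ℕ → ℝ)
    (hS : ∀ j, S j = (∑ i ∈ Finset.Icc 1 j, β^(j-i) * (x i ⬝ᵥ v))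
      + β^j/(1-β) * (x 0 ⬝ᵥ v))
    (k : ℕ) (hk : 1 ≤ k) :
    ∑ i, ((A i ⬝ᵥ A i) / F) *
        ((x k + ((0 - A i ⬝ᵥ x k) / (A i ⬝ᵥ A i)) • A i + M • y k) ⬝ᵥ v)
      = r * (x k ⬝ᵥ v) - ζ * S (k-1) := by
  have hFpos : 0 < F := by
    have : Nonempty (Fin m) := ⟨ω 0⟩
    rw [hF]
    exact Finset.sum_pos (fun i _ => lt_of_le_of_ne (dotProduct_self_star_nonneg (A i))
      (hrow i).symm) Finset.univ_nonempty
  have hβ1 : β ≠ 1 := hβ.2.ne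
  have hSeq : S = momentumSum β (fun j => x j ⬝ᵥ v) := funext hS
  obtain ⟨j, rfl⟩ : ∃ j, k = j + 1 := Nat.exists_eq_add_of_le' hk
  have hyv := momentum_eq_of_recurrence hβ1 (a := fun j => x j ⬝ᵥ v)
    (p := fun j => y j ⬝ᵥ v) (by simp [hy0])
    (fun j => by simp [hy j, add_dotProduct, sub_dotProduct]) j
  subst hF hr hζ hSeq
  have hstep := sum_rowProb_mul_kaczmarz_step_dotProduct A hrow hFpos.ne' 0 (x (j + 1))
    (M • y (j + 1)) v
  simp only [Pi.zero_apply, zero_dotProduct] at hstep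
  rw [hstep, mulVec_dotProduct_mulVec_of_gram_mulVec_eq_smul hv, add_dotProduct, smul_dotProduct,
    smul_eq_mul, hyv, Nat.add_sub_cancel]
  field_simp
  ring

/-- one-step conditional expectation for KGSM (with solution
`x = 0`, i.e. `b = 0`): conditionally on the first `k` indices `ω 0, …, ω (k-1)`,
averaging only over the choice `i` of the `k`-th row gives
`E⟨x_{k+1}, v⟩ = r⟨x_k, v⟩ - ζ S_{k-1}`. -/
theorem kgsm_one_step_conditional_expectation {m n : ℕ}
    (A : Matrix (Fin m) (Fin n) ℝ)
    (hrow : ∀ i, A i ⬝ᵥ A i ≠ 0)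
    (F : ℝ) (hF : F = ∑ i, A i ⬝ᵥ A i)
    (v : Fin n → ℝ) (σsq : ℝ) (hv : (Aᵀ * A).mulVec v = σsq • v)
    (β M : ℝ) (hβ : β ∈ Set.Ico (0:ℝ) 1) (hM : M ∈ Set.Icc (0:ℝ) 1)
    (ω : ℕ → Fin m) (x y : ℕ → Fin n → ℝ) (hy0 : y 0 = 0)
    (hx : ∀ j, x (j+1) = x j
      + ((0 - A (ω j) ⬝ᵥ x j) / (A (ω j) ⬝ᵥ A (ω j))) • A (ω j) + M • y j)
    (hy : ∀ j, y (j+1) = β • y j + (1-β) • (x (j+1) - x j))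
    (r ζ : ℝ) (hr : r = 1 - σsq/F + M*(1-β)) (hζ : ζ = M*(1-β)^2)
    (S : ℕ → ℝ)
    (hS : ∀ j, S j = (∑ i ∈ Finset.Icc 1 j, β^(j-i) * (x i ⬝ᵥ v))
      + β^j/(1-β) * (x 0 ⬝ᵥ v))
    (k : ℕ) (hk : 1 ≤ k) :
    ∑ i, ((A i ⬝ᵥ A i) / F) *
        ((x k + ((0 - A i ⬝ᵥ x k) / (A i ⬝ᵥ A i)) • A i + M • y k) ⬝ᵥ v)
      = r * (x k ⬝ᵥ v) - ζ * S (k-1) :=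
  kgsm_one_step_conditional_expectation_general A hrow F hF v σsq hv β M hβ ω x y hy0 hy r ζ hr hζ S
    hS k hk
end
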